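/- If S is an invertible m×m matrix and T is an invertible n×n matrix over F, x ∈ 𝒫(S), and y ∈ 𝒫(T), then x ⊗ y ∈ 𝒫(S ⊗ T). -/

import Mathlib

/-- The Kronecker product of vectors. -/
def vecKron {F : Type*} [Mul F] {m n : ℕ} (x : Fin m → F) (y : Fin n → F) :
    Fin (m * n) → F :=
  fun i => x i.divNat * y i.modNat

/-- The Kronecker product of matrices. -/
def matKron {F : Type*} [Mul F] {m n p q : ℕ}
    (S : Matrix (Fin m) (Fin n) F) (T : Matrix (Fin p) (Fin q) F) :
    Matrix (Fin (m * p)) (Fin (n * q)) F :=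
  fun i j => S i.divNat j.divNat * T i.modNat j.modNat

/-- An entry of a matrix over `F = ℝ` or `ℂ` is nonnegative:
it is a nonnegative real number. -/
def entryNonneg {F : Type*} [RCLike F] (z : F) : Prop :=
  ∃ r : ℝ, 0 ≤ r ∧ z = (r : F)

/-- The Perron spectracone `𝒞(S) = {x : S D_x S⁻¹ ≥ 0 entrywise}`. -/
def spectracone {F : Type*} [RCLike F] {n : ℕ} (S : Matrix (Fin n) (Fin n) F) :
    Set (Fin n → F) :=
  {x | ∀ i j, entryNonneg ((S * Matrix.diagonal x * S⁻¹) i j)}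

/-- The Perron spectratope `𝒫(S) = {x ∈ 𝒞(S) : ‖x‖_∞ = 1}`. -/
def spectratope {F : Type*} [RCLike F] {n : ℕ} (S : Matrix (Fin n) (Fin n) F) :
    Set (Fin n → F) :=
  {x | x ∈ spectracone S ∧ (Finset.univ.sup fun i => ‖x i‖₊) = 1}

/-!
`matKron` is Mathlib's Kronecker product `⊗ₖ` reindexed along `finProdFinEquiv`, so it is
multiplicative and commutes with inversion and with `diagonal`. Hence
`(S ⊗ T) D_{x ⊗ y} (S ⊗ T)⁻¹ = (S D_x S⁻¹) ⊗ (T D_y T⁻¹)`, whose entries are products of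
nonnegative reals, and `‖x ⊗ y‖_∞ = ‖x‖_∞ ‖y‖_∞`.
-/

open Matrix Kronecker

section Kron

variable {F : Type*} {m n p q r s : ℕ}

theorem matKron_eq_reindex_kronecker [Mul F] (A : Matrix (Fin m) (Fin n) F)
    (B : Matrix (Fin p) (Fin q) F) :
    matKron A B = reindex finProdFinEquiv finProdFinEquiv (A ⊗ₖ B) :=
  rfl

theorem diagonal_vecKron [MulZeroClass F] (x : Fin m → F) (y : Fin n → F) :
    diagonal (vecKron x y) = matKron (diagonal x) (diagonal y) := by
  rw [matKron_eq_reindex_kronecker, diagonal_kronecker_diagonal, reindex_apply,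
    submatrix_diagonal_equiv]
  rfl

theorem matKron_mul_matKron [CommSemiring F] (A : Matrix (Fin m) (Fin n) F)
    (B : Matrix (Fin p) (Fin q) F) (C : Matrix (Fin n) (Fin r) F)
    (D : Matrix (Fin q) (Fin s) F) :
    matKron A B * matKron C D = matKron (A * C) (B * D) := by
  simp only [matKron_eq_reindex_kronecker, reindex_apply, submatrix_mul_equiv, mul_kronecker_mul]

theorem inv_matKron [CommRing F] (A : Matrix (Fin m) (Fin m) F) (B : Matrix (Fin n) (Fin n) F) :
    (matKron A B)⁻¹ = matKron A⁻¹ B⁻¹ := by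
  rw [matKron_eq_reindex_kronecker, inv_reindex, inv_kronecker]
  rfl

theorem matKron_apply [Mul F] (A : Matrix (Fin m) (Fin n) F) (B : Matrix (Fin p) (Fin q) F)
    (i : Fin (m * p)) (j : Fin (n * q)) :
    matKron A B i j = A i.divNat j.divNat * B i.modNat j.modNat :=
  rfl

theorem vecKron_finProdFinEquiv [Mul F] (x : Fin m → F) (y : Fin n → F) (i : Fin m) (j : Fin n) :
    vecKron x y (finProdFinEquiv (i, j)) = x i * y j := by
  change x (finProdFinEquiv.symm (finProdFinEquiv (i, j))).1 *
    y (finProdFinEquiv.symm (finProdFinEquiv (i, j))).2 = _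
  rw [Equiv.symm_apply_apply]

end Kron

theorem entryNonneg_mul {F : Type*} [RCLike F] {a b : F} (ha : entryNonneg a)
    (hb : entryNonneg b) : entryNonneg (a * b) := by
  obtain ⟨r, hr, rfl⟩ := ha
  obtain ⟨t, ht, rfl⟩ := hb
  exact ⟨r * t, mul_nonneg hr ht, by push_cast; rfl⟩

theorem vecKron_mem_spectracone {F : Type*} [RCLike F] {m n : ℕ}
    {S : Matrix (Fin m) (Fin m) F} {T : Matrix (Fin n) (Fin n) F} {x : Fin m → F}
    {y : Fin n → F} (hx : x ∈ spectracone S) (hy : y ∈ spectracone T) :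
    vecKron x y ∈ spectracone (matKron S T) := by
  intro i j
  rw [diagonal_vecKron, inv_matKron, matKron_mul_matKron, matKron_mul_matKron, matKron_apply]
  exact entryNonneg_mul (hx _ _) (hy _ _)

theorem sup_nnnorm_vecKron {F : Type*} [SeminormedRing F] [NormMulClass F] {m n : ℕ}
    (x : Fin m → F) (y : Fin n → F) :
    (Finset.univ.sup fun i => ‖vecKron x y i‖₊) =
      (Finset.univ.sup fun i => ‖x i‖₊) * Finset.univ.sup fun j => ‖y j‖₊ := by
  rw [← Finset.map_univ_equiv finProdFinEquiv, Finset.sup_map, ← Finset.univ_product_univ,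
    Finset.sup_product_left, NNReal.finset_sup_mul]
  simp_rw [NNReal.mul_finset_sup, Function.comp_apply, Equiv.coe_toEmbedding,
    vecKron_finProdFinEquiv, nnnorm_mul]

theorem vecKron_mem_spectratope_matKron_general {F : Type*} [RCLike F] {m n : ℕ}
    (S : Matrix (Fin m) (Fin m) F) (T : Matrix (Fin n) (Fin n) F)
    (x : Fin m → F) (y : Fin n → F)
    (hx : x ∈ spectratope S) (hy : y ∈ spectratope T) :
    vecKron x y ∈ spectratope (matKron S T) :=
  ⟨vecKron_mem_spectracone hx.1 hy.1, by rw [sup_nnnorm_vecKron, hx.2, hy.2, one_mul]⟩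

/-- `𝒫(S) ⊗ 𝒫(T) ⊆ 𝒫(S ⊗ T)`. -/
theorem vecKron_mem_spectratope_matKron {F : Type*} [RCLike F] {m n : ℕ}
    (S : Matrix (Fin m) (Fin m) F) (T : Matrix (Fin n) (Fin n) F)
    (hS : IsUnit S.det) (hT : IsUnit T.det)
    (x : Fin m → F) (y : Fin n → F)
    (hx : x ∈ spectratope S) (hy : y ∈ spectratope T) :
    vecKron x y ∈ spectratope (matKron S T) :=
  vecKron_mem_spectratope_matKron_general S T x y hx hy
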